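/- arXiv:0803.4079 — 3 statements merged into one kernel-verified Lean document; each statement's English description precedes it below -/
import Mathlib

section
/- There is no ternary permutation of the nonzero elements of (ℤ/2ℤ)^3; that is, (ℤ/2ℤ)^3 is not sequentially ternary. -/
def SeqTernary (n : ℕ) : Prop :=
  ∃ v : ℕ → (Fin n → ZMod 2),
    Set.BijOn v (Set.Icc 1 (2 ^ n - 1)) {x | x ≠ 0} ∧
    ∀ i : ℕ, 2 ≤ i → i ≤ 2 ^ n - 2 → Even i → v (i - 1) + v i + v (i + 1) = 0

theorem stmt2 : ¬ SeqTernary 3 := by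
  rintro ⟨v, hbij, hcond⟩
  have h2 := hcond 2 (by norm_num) (by norm_num) (by decide)
  have h4 := hcond 4 (by norm_num) (by norm_num) (by decide)
  have h6 := hcond 6 (by norm_num) (by norm_num) (by decide)
  norm_num at h2 h4 h6
  have hbij7 : Set.BijOn v (Set.Icc 1 7) {x | x ≠ 0} := by norm_num at hbij; exact hbij
  obtain ⟨hmaps, hinj, hsurj⟩ := hbij7
  -- sum over the image finset
  have hsum : ∑ i ∈ Finset.Icc 1 7, v i
      = ∑ x ∈ Finset.univ.filter (fun x : Fin 3 → ZMod 2 => x ≠ 0), x := by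
    apply Finset.sum_bij (fun a _ => v a)
    · intro a ha
      simp only [Finset.mem_filter, Finset.mem_univ, true_and]
      exact hmaps (by simpa [Set.mem_Icc] using Finset.mem_Icc.mp ha)
    · intro a ha b hb h
      exact hinj (by simpa [Set.mem_Icc] using Finset.mem_Icc.mp ha)
        (by simpa [Set.mem_Icc] using Finset.mem_Icc.mp hb) h
    · intro x hx
      obtain ⟨a, ha, rfl⟩ := hsurj (by simpa using (Finset.mem_filter.mp hx).2)
      exact ⟨a, Finset.mem_Icc.mpr (by simpa [Set.mem_Icc] using ha), rfl⟩
    · intro a ha; rfl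
  have hrhs : ∑ x ∈ Finset.univ.filter (fun x : Fin 3 → ZMod 2 => x ≠ 0), x = 0 := by
    decide
  have hicc : Finset.Icc (1:ℕ) 7 = {1, 2, 3, 4, 5, 6, 7} := by decide
  rw [hrhs, hicc] at hsum
  simp [Finset.sum_insert, Finset.mem_insert] at hsum
  -- hsum : v 1 + v 2 + v 3 + v 4 + v 5 + v 6 + v 7 = 0 (some association)
  have hdd : v 5 + v 5 = 0 := by
    funext i
    have : ∀ a : ZMod 2, a + a = 0 := by decide
    exact this _
  have h35 : v 3 = v 5 := by linear_combination h2 + h4 + h6 - hsum - hdd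
  have : (3:ℕ) = 5 := hinj (by norm_num) (by norm_num) h35
  norm_num at this
end

section
/- The group (ℤ/2ℤ)^5 is sequentially ternary, i.e., there exists a bijective enumeration (v_1, …, v_31) of the 31 nonzero elements of (ℤ/2ℤ)^5 such that v_{i−1} + v_i + v_{i+1} = 0 for every even i with 2 ≤ i ≤ 30. -/
def tcode : ℕ → ℕ := fun n =>
  [0, 1, 2, 3, 4, 7, 8, 15, 5, 10, 16, 26, 6, 28, 9, 21, 24, 13, 19, 30, 18,
   12, 27, 23, 25, 14, 17, 31, 20, 11, 22, 29].getD n 0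

def tv : ℕ → (Fin 5 → ZMod 2) := fun n j => if (tcode n).testBit j.val then 1 else 0

theorem stmt10 : SeqTernary 5 := by
  refine ⟨tv, ⟨?_, ?_, ?_⟩, ?_⟩
  · intro x hx
    obtain ⟨h1, h2⟩ := hx
    have hx' : x ∈ Finset.Icc 1 31 := Finset.mem_Icc.2 ⟨h1, h2⟩
    have : ∀ x ∈ Finset.Icc 1 31, tv x ≠ 0 := by decide
    exact this x hx'
  · intro x hx y hy h
    have hx' : x ∈ Finset.Icc 1 31 := Finset.mem_Icc.2 ⟨hx.1, hx.2⟩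
    have hy' : y ∈ Finset.Icc 1 31 := Finset.mem_Icc.2 ⟨hy.1, hy.2⟩
    have H : ∀ x ∈ Finset.Icc 1 31, ∀ y ∈ Finset.Icc 1 31, tv x = tv y → x = y := by decide
    exact H x hx' y hy' h
  · intro y hy
    have H : ∀ y : Fin 5 → ZMod 2, y ≠ 0 → ∃ x ∈ Finset.Icc 1 31, tv x = y := by decide
    obtain ⟨x, hx, hvx⟩ := H y hy
    exact ⟨x, Set.mem_Icc.2 (Finset.mem_Icc.1 hx), hvx⟩
  · intro i h1 h2 h3
    have hi : i ∈ Finset.Icc 2 30 := Finset.mem_Icc.2 ⟨h1, h2⟩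
    have H : ∀ i ∈ Finset.Icc 2 30, Even i → tv (i - 1) + tv i + tv (i + 1) = 0 := by decide
    exact H i hi h3
end

section
/- The group (ℤ/2ℤ)^6 is sequentially ternary, i.e., there exists a bijective enumeration (v_1, …, v_63) of the 63 nonzero elements of (ℤ/2ℤ)^6 such that v_{i−1} + v_i + v_{i+1} = 0 for every even i with 2 ≤ i ≤ 62. -/
set_option maxRecDepth 20000

namespace Stmt11Aux

def L : List ℕ :=
  [18, 28, 14, 62, 48, 58, 10, 16, 26, 37, 63, 36, 27, 29, 6, 55, 49, 40, 25, 22,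
   15, 60, 51, 43, 24, 7, 31, 8, 23, 33, 54, 2, 52, 9, 61, 5, 56, 59, 3, 46,
   45, 4, 41, 11, 34, 47, 13, 12, 1, 20, 21, 32, 53, 38, 19, 42, 57, 39, 30, 44,
   50, 35, 17]

def toVec (m : ℕ) : Fin 6 → ZMod 2 := fun j => if m.testBit j then 1 else 0

def toNat (x : Fin 6 → ZMod 2) : ℕ :=
  (x 0).val + 2 * (x 1).val + 4 * (x 2).val + 8 * (x 3).val + 16 * (x 4).val + 32 * (x 5).val

def v (i : ℕ) : Fin 6 → ZMod 2 := toVec (L.getD (i - 1) 0)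

lemma toVec_xor (a b : ℕ) : toVec (a ^^^ b) = toVec a + toVec b := by
  funext j
  simp only [toVec, Nat.testBit_xor, Pi.add_apply]
  rcases a.testBit j <;> rcases b.testBit j <;> decide

lemma toNat_toVec : ∀ m ∈ Finset.range 64, toNat (toVec m) = m := by decide

lemma toVec_toNat : ∀ x : Fin 6 → ZMod 2, toVec (toNat x) = x := by decide

lemma toNat_lt (x : Fin 6 → ZMod 2) : toNat x < 64 := by
  revert x; decide

lemma getD_mem : ∀ i ∈ Finset.range 63, L.getD i 0 ∈ Finset.Icc 1 63 := by decide

lemma getD_inj : ∀ i ∈ Finset.range 63, ∀ j ∈ Finset.range 63,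
    L.getD i 0 = L.getD j 0 → i = j := by decide

set_option maxRecDepth 8000 in
lemma getD_surj : ∀ m ∈ Finset.Icc 1 63, ∃ i ∈ Finset.range 63, L.getD i 0 = m := by decide

lemma tern : ∀ k ∈ Finset.range 31,
    L.getD (2 * k) 0 ^^^ L.getD (2 * k + 1) 0 ^^^ L.getD (2 * k + 2) 0 = 0 := by decide

end Stmt11Aux

theorem stmt11 : SeqTernary 6 := by
  refine ⟨Stmt11Aux.v, ⟨?_, ?_, ?_⟩, ?_⟩
  · -- MapsTo
    intro i hi
    simp only [Set.mem_Icc] at hi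
    have h2 := Stmt11Aux.getD_mem (i - 1) (Finset.mem_range.2 (by omega))
    simp only [Finset.mem_Icc] at h2
    intro hx
    simp only [Stmt11Aux.v] at hx
    have e1 := congrArg Stmt11Aux.toNat hx
    rw [Stmt11Aux.toNat_toVec _ (Finset.mem_range.2 (by omega))] at e1
    have e0 : Stmt11Aux.toNat (0 : Fin 6 → ZMod 2) = 0 := by decide
    omega
  · -- InjOn
    intro i hi j hj hij
    simp only [Set.mem_Icc] at hi hj
    have mi := Stmt11Aux.getD_mem (i - 1) (Finset.mem_range.2 (by omega))
    have mj := Stmt11Aux.getD_mem (j - 1) (Finset.mem_range.2 (by omega))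
    simp only [Finset.mem_Icc] at mi mj
    simp only [Stmt11Aux.v] at hij
    have e := congrArg Stmt11Aux.toNat hij
    rw [Stmt11Aux.toNat_toVec _ (Finset.mem_range.2 (by omega)),
        Stmt11Aux.toNat_toVec _ (Finset.mem_range.2 (by omega))] at e
    have := Stmt11Aux.getD_inj (i - 1) (Finset.mem_range.2 (by omega))
      (j - 1) (Finset.mem_range.2 (by omega)) e
    omega
  · -- SurjOn
    intro x hx
    have hxne : x ≠ 0 := hx
    have hvx := Stmt11Aux.toVec_toNat x
    have hlt := Stmt11Aux.toNat_lt x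
    have hpos : 1 ≤ Stmt11Aux.toNat x := by
      by_contra h
      have h0 : Stmt11Aux.toNat x = 0 := by omega
      apply hxne
      rw [← hvx, h0]
      decide
    obtain ⟨i, hi, he⟩ := Stmt11Aux.getD_surj (Stmt11Aux.toNat x)
      (Finset.mem_Icc.2 ⟨hpos, by omega⟩)
    simp only [Finset.mem_range] at hi
    refine ⟨i + 1, Set.mem_Icc.2 ⟨by omega, by omega⟩, ?_⟩
    show Stmt11Aux.toVec (Stmt11Aux.L.getD (i + 1 - 1) 0) = x
    simp only [Nat.add_sub_cancel, he, hvx]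
  · -- ternary
    intro i h2 h62 heven
    obtain ⟨k, hk⟩ := heven
    have ht := Stmt11Aux.tern (k - 1) (Finset.mem_range.2 (by omega))
    have e1 : i - 1 - 1 = 2 * (k - 1) := by omega
    have e2 : i - 1 = 2 * (k - 1) + 1 := by omega
    have e3 : i + 1 - 1 = 2 * (k - 1) + 2 := by omega
    show Stmt11Aux.v (i - 1) + Stmt11Aux.v i + Stmt11Aux.v (i + 1) = 0
    simp only [Stmt11Aux.v]
    rw [e1, e2, e3, ← Stmt11Aux.toVec_xor, ← Stmt11Aux.toVec_xor, ht]
    decide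
end
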